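/- For a sequence of n > 2 i.i.d. Bernoulli(p) trials with 0 < p < 1, the expected value of the difference between the proportion of successes on trials immediately following a success and the proportion of successes on trials immediately following a failure, conditional on both proportions being defined, equals −1/(n−1). -/

import Mathlib

open Finset

/-- Probability weight of a Bernoulli(p) binary sequence. -/
def wgt {n : ℕ} (p : ℝ) (x : Fin n → Bool) : ℝ :=
  ∏ i, if x i then p else 1 - p

/-- The set of trials that immediately follow `k` consecutive successes. -/
def streakSet {n : ℕ} (k : ℕ) (x : Fin n → Bool) : Finset (Fin n) :=
  Finset.univ.filter (fun i : Fin n =>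
    k ≤ i.val ∧ ∀ j : Fin n, i.val - k ≤ j.val → j.val < i.val → x j = true)

/-- The proportion of successes on the trials that immediately follow `k`
consecutive successes. -/
noncomputable def phat {n : ℕ} (k : ℕ) (x : Fin n → Bool) : ℝ :=
  (∑ i ∈ streakSet k x, if x i then (1:ℝ) else 0) / ((streakSet k x).card : ℝ)

/-- Number of successes in the sequence. -/
def ones {n : ℕ} (x : Fin n → Bool) : ℕ :=
  (Finset.univ.filter (fun i => x i = true)).card

/-!
Write `m = n - 1`, `A_t` (`initCount`) for the number of the first `m` trials with outcome `t`, so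
that `A_1 = |I_1|` and `A_0 = |J_1|`, and `C_{t,u}` (`transitionCount`) for the number of
transitions `t → u`. On the conditioning event
`P̂ - (1 - Q̂) = 1 - C_{1,0} / A_1 - C_{0,1} / A_0`.

The Bernoulli weight restricted to the event is invariant under the permutations of the first
`m` trials, so the weighted mass of `1{x_u = t, x_v = ¬t} / A_t` (`pairMass`) takes one value on
pairs of distinct early trials and one value on pairs `(u, last)`. The `m` transitions `(j, j + 1)`
consist of `m - 1` pairs of the first kind and one of the second, while all pairs `(u, v)` with `u`
early and `v ≠ u` consist of `m (m - 1)` and `m` of them: exactly `m` times as many of each kind.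
Summed over all those pairs, `1{x_u = t, x_v = ¬t} / A_t` is the total number of `¬t`'s. Hence
`m 𝔼[C_{t,¬t} / A_t] = 𝔼[#{i | x_i = ¬t}]`, the two values of `t` add up to `m + 1`, and the
conditional expectation is `1 - (m + 1) / m = -1 / m`.
-/

namespace Equiv.Perm

variable {α : Type*} [DecidableEq α]

theorem exists_fixing_apply_pair {l u v u' v' : α} (huv : u ≠ v) (huv' : u' ≠ v')
    (hu : u ≠ l) (hv : v ≠ l) (hu' : u' ≠ l) (hv' : v' ≠ l) :
    ∃ σ : Perm α, σ l = l ∧ σ u = u' ∧ σ v = v' := by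
  set σ₁ := swap u u'
  have hσ₁l : σ₁ l = l := swap_apply_of_ne_of_ne hu.symm hu'.symm
  have hσ₁v : σ₁ v ≠ u' := fun h => huv (σ₁.injective ((swap_apply_left u u').trans h.symm))
  have hσ₁vl : σ₁ v ≠ l := fun h => hv (σ₁.injective (h.trans hσ₁l.symm))
  refine ⟨swap (σ₁ v) v' * σ₁, ?_, ?_, swap_apply_left _ _⟩
  · rw [mul_apply, hσ₁l, swap_apply_of_ne_of_ne hσ₁vl.symm hv'.symm]
  · rw [mul_apply, swap_apply_left, swap_apply_of_ne_of_ne hσ₁v.symm huv']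

theorem sum_precomp [Fintype α] {β M : Type*} [Fintype β] [AddCommMonoid M]
    (σ : Perm α) (f : (α → β) → M) : ∑ x, f (x ∘ σ) = ∑ x, f x :=
  Equiv.sum_comp (σ.symm.arrowCongr (Equiv.refl β)) f

end Equiv.Perm

section Transitions

variable {m : ℕ}

def initCount (t : Bool) (x : Fin (m + 1) → Bool) : ℕ :=
  #{j : Fin m | x j.castSucc = t}

def transitionCount (t u : Bool) (x : Fin (m + 1) → Bool) : ℕ :=
  #{j : Fin m | x j.castSucc = t ∧ x j.succ = u}

theorem streakSet_one_eq_map (x : Fin (m + 1) → Bool) :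
    streakSet 1 x = ({j : Fin m | x j.castSucc = true} : Finset (Fin m)).map (Fin.succEmb m) := by
  ext i
  cases i using Fin.cases with
  | zero => simp [streakSet]
  | succ j =>
    simp only [streakSet, mem_filter, mem_univ, true_and, Fin.val_succ, mem_map,
      Fin.coe_succEmb, Fin.succ_inj, exists_eq_right]
    refine ⟨fun h => h.2 j.castSucc (by simp) (by simp), fun h => ⟨by omega, fun k hk₁ hk₂ => ?_⟩⟩
    rwa [show k = j.castSucc from Fin.ext (by simp; omega)]

theorem card_streakSet_one (x : Fin (m + 1) → Bool) :
    #(streakSet 1 x) = initCount true x := by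
  rw [streakSet_one_eq_map, card_map, initCount]

theorem sum_streakSet_one (x : Fin (m + 1) → Bool) :
    ∑ i ∈ streakSet 1 x, (if x i then (1 : ℝ) else 0) = transitionCount true true x := by
  rw [streakSet_one_eq_map, sum_map, sum_boole, filter_filter]
  rfl

theorem phat_one (x : Fin (m + 1) → Bool) :
    phat 1 x = transitionCount true true x / initCount true x := by
  rw [phat, sum_streakSet_one, card_streakSet_one]

theorem initCount_not (t : Bool) (x : Fin (m + 1) → Bool) :
    initCount t (fun i => !x i) = initCount (!t) x := by
  simp only [initCount, Bool.not_eq_eq_eq_not]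

theorem transitionCount_not (t u : Bool) (x : Fin (m + 1) → Bool) :
    transitionCount t u (fun i => !x i) = transitionCount (!t) (!u) x := by
  simp only [transitionCount, Bool.not_eq_eq_eq_not]

theorem transitionCount_add_transitionCount (t : Bool) (x : Fin (m + 1) → Bool) :
    transitionCount t (!t) x + transitionCount t t x = initCount t x := by
  rw [transitionCount, transitionCount, initCount, ← filter_filter, ← filter_filter, add_comm]
  convert card_filter_add_card_filter_not (s := ({j : Fin m | x j.castSucc = t} : Finset _))
    (fun j => x j.succ = t) using 3
  simp only [Bool.eq_not_iff]

theorem initCount_add_ite_last (t : Bool) (x : Fin (m + 1) → Bool) :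
    initCount t x + (if x (Fin.last m) = t then 1 else 0) = #{i | x i = t} := by
  simp only [initCount, card_filter, Fin.sum_univ_castSucc]

theorem card_filter_comp_perm (t : Bool) (x : Fin (m + 1) → Bool) (σ : Equiv.Perm (Fin (m + 1))) :
    #{i | (x ∘ σ) i = t} = #{i | x i = t} := by
  simp only [card_filter, Function.comp_apply, Equiv.sum_comp σ (fun i => if x i = t then 1 else 0)]

theorem initCount_comp_perm (t : Bool) (x : Fin (m + 1) → Bool) {σ : Equiv.Perm (Fin (m + 1))}
    (hσ : σ (Fin.last m) = Fin.last m) : initCount t (x ∘ σ) = initCount t x := by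
  have h := initCount_add_ite_last t (x ∘ σ)
  rw [card_filter_comp_perm, ← initCount_add_ite_last, Function.comp_apply, hσ] at h
  exact Nat.add_right_cancel h

theorem sum_card_filter_eq_not (x : Fin (m + 1) → Bool) :
    ∑ t : Bool, #{i | x i = !t} = m + 1 := by
  rw [Fintype.sum_bool, Bool.not_true, Bool.not_false]
  convert card_filter_add_card_filter_not (s := univ) (fun i => x i = false) using 2 <;> simp

end Transitions

section PairMass

variable {m : ℕ}

def IsInvariantFixingLast (w : (Fin (m + 1) → Bool) → ℝ) : Prop :=
  ∀ σ : Equiv.Perm (Fin (m + 1)), σ (Fin.last m) = Fin.last m → ∀ x, w (x ∘ σ) = w x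

variable (w : (Fin (m + 1) → Bool) → ℝ) (t : Bool)

noncomputable def pairMass (u v : Fin (m + 1)) : ℝ :=
  ∑ x, w x * ((if x u = t ∧ x v = !t then 1 else 0) / initCount t x)

variable {w}

theorem pairMass_self (u : Fin (m + 1)) : pairMass w t u u = 0 := by
  simp [pairMass, Bool.eq_not_iff]

theorem pairMass_apply_perm (hw : IsInvariantFixingLast w) {σ : Equiv.Perm (Fin (m + 1))}
    (hσ : σ (Fin.last m) = Fin.last m) (u v : Fin (m + 1)) :
    pairMass w t (σ u) (σ v) = pairMass w t u v := by
  conv_rhs => rw [pairMass, ← Equiv.Perm.sum_precomp σ]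
  simp only [Function.comp_apply, hw σ hσ, initCount_comp_perm t _ hσ, pairMass]

theorem pairMass_castSucc_eq (hw : IsInvariantFixingLast w) {u v u' v' : Fin m} (huv : u ≠ v)
    (huv' : u' ≠ v') :
    pairMass w t u.castSucc v.castSucc = pairMass w t u'.castSucc v'.castSucc := by
  obtain ⟨σ, hσ, hu, hv⟩ := Equiv.Perm.exists_fixing_apply_pair
    (Fin.castSucc_injective _ |>.ne huv) (Fin.castSucc_injective _ |>.ne huv')
    (Fin.castSucc_lt_last u).ne (Fin.castSucc_lt_last v).ne
    (Fin.castSucc_lt_last u').ne (Fin.castSucc_lt_last v').ne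
  rw [← hu, ← hv, pairMass_apply_perm t hw hσ]

theorem pairMass_castSucc_last_eq (hw : IsInvariantFixingLast w) (u u' : Fin m) :
    pairMass w t u.castSucc (Fin.last m) = pairMass w t u'.castSucc (Fin.last m) := by
  have hσ : Equiv.swap u.castSucc u'.castSucc (Fin.last m) = Fin.last m :=
    Equiv.swap_apply_of_ne_of_ne (Fin.castSucc_lt_last u).ne' (Fin.castSucc_lt_last u').ne'
  rw [← pairMass_apply_perm t hw hσ, Equiv.swap_apply_left, hσ]

end PairMass

section Sums

variable {m : ℕ} {w : (Fin (m + 1) → Bool) → ℝ} (t : Bool)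

theorem natCast_initCount (x : Fin (m + 1) → Bool) :
    (initCount t x : ℝ) = ∑ j : Fin m, if x j.castSucc = t then 1 else 0 :=
  natCast_card_filter _ _

theorem sum_mul_transitionCount_div :
    ∑ x, w x * (transitionCount t (!t) x / initCount t x) =
      ∑ j : Fin m, pairMass w t j.castSucc j.succ := by
  simp only [pairMass, transitionCount, natCast_card_filter, sum_div, mul_sum]
  exact sum_comm

theorem sum_pairMass_castSucc (hsupp : ∀ x, w x ≠ 0 → 0 < initCount t x) :
    ∑ u : Fin m, ∑ v : Fin m, pairMass w t u.castSucc v.castSucc =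
      ∑ x, w x * initCount (!t) x := by
  simp only [pairMass]
  rw [sum_congr rfl fun u _ => sum_comm, sum_comm]
  refine sum_congr rfl fun x _ => ?_
  by_cases hx : w x = 0
  · simp [hx]
  have hA : (initCount t x : ℝ) ≠ 0 := by have := hsupp x hx; positivity
  have hpairs : ∑ u : Fin m, ∑ v : Fin m,
      (if x u.castSucc = t ∧ x v.castSucc = !t then (1 : ℝ) else 0) =
        initCount t x * initCount (!t) x := by
    simp only [natCast_initCount, sum_mul_sum, ite_zero_mul_ite_zero, mul_one]
  simp only [← mul_sum, ← sum_div, hpairs]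
  field_simp

theorem sum_pairMass_castSucc_last (hsupp : ∀ x, w x ≠ 0 → 0 < initCount t x) :
    ∑ u : Fin m, pairMass w t u.castSucc (Fin.last m) =
      ∑ x, w x * (if x (Fin.last m) = !t then 1 else 0) := by
  simp only [pairMass]
  rw [sum_comm]
  refine sum_congr rfl fun x _ => ?_
  by_cases hx : w x = 0
  · simp [hx]
  have hA : (initCount t x : ℝ) ≠ 0 := by have := hsupp x hx; positivity
  have hpairs : ∑ u : Fin m,
      (if x u.castSucc = t ∧ x (Fin.last m) = !t then (1 : ℝ) else 0) =
        initCount t x * (if x (Fin.last m) = !t then 1 else 0) := by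
    simp only [natCast_initCount, sum_mul, ite_zero_mul_ite_zero, mul_one]
  simp only [← mul_sum, ← sum_div, hpairs]
  field_simp

theorem natCast_mul_sum_mul_transitionCount_div (hm : 2 ≤ m) (hw : IsInvariantFixingLast w)
    (hsupp : ∀ x, w x ≠ 0 → 0 < initCount t x) :
    m * ∑ x, w x * (transitionCount t (!t) x / initCount t x) =
      ∑ x, w x * #{i | x i = !t} := by
  obtain ⟨k, rfl⟩ : ∃ k, m = k + 1 := ⟨m - 1, by omega⟩
  set c := pairMass w t (0 : Fin (k + 1)).castSucc (Fin.last k).castSucc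
  set c' := pairMass w t (0 : Fin (k + 1)).castSucc (Fin.last (k + 1))
  have h0 : (0 : Fin (k + 1)) ≠ Fin.last k := Fin.ext_iff.not.mpr (by simp; omega)
  have hpair (u v : Fin (k + 1)) (huv : u ≠ v) : pairMass w t u.castSucc v.castSucc = c :=
    pairMass_castSucc_eq t hw huv h0
  have hlast (u : Fin (k + 1)) : pairMass w t u.castSucc (Fin.last (k + 1)) = c' :=
    pairMass_castSucc_last_eq t hw u 0
  have hrow (u : Fin (k + 1)) : ∑ v : Fin (k + 1), pairMass w t u.castSucc v.castSucc = k * c := by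
    rw [← add_sum_erase _ _ (mem_univ u), pairMass_self, zero_add,
      sum_congr rfl fun v hv => hpair u v (ne_of_mem_erase hv).symm, sum_const,
      card_erase_of_mem (mem_univ u), card_univ, Fintype.card_fin, nsmul_eq_mul]
    simp
  have hsteps : ∑ j : Fin (k + 1), pairMass w t j.castSucc j.succ = k * c + c' := by
    rw [Fin.sum_univ_castSucc, Fin.succ_last, hlast]
    simp_rw [Fin.succ_castSucc]
    rw [sum_congr rfl fun i _ => hpair _ _ (Fin.castSucc_lt_succ (i := i)).ne]
    simp
  calc ((k + 1 : ℕ) : ℝ) * ∑ x, w x * (transitionCount t (!t) x / initCount t x)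
      = (k + 1) * (k * c + c') := by rw [sum_mul_transitionCount_div, hsteps]; push_cast; rfl
    _ = ∑ u : Fin (k + 1), ∑ v : Fin (k + 1), pairMass w t u.castSucc v.castSucc +
          ∑ u : Fin (k + 1), pairMass w t u.castSucc (Fin.last (k + 1)) := by
      simp only [hrow, hlast, sum_const, card_univ, Fintype.card_fin, nsmul_eq_mul]
      push_cast
      ring
    _ = ∑ x, w x * #{i | x i = !t} := by
      rw [sum_pairMass_castSucc t hsupp, sum_pairMass_castSucc_last t hsupp, ← sum_add_distrib]
      refine sum_congr rfl fun x _ => ?_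
      rw [← initCount_add_ite_last]
      push_cast
      ring

theorem natCast_mul_sum_sum_transitionCount_div (hm : 2 ≤ m) (hw : IsInvariantFixingLast w)
    (hsupp : ∀ x, w x ≠ 0 → ∀ t, 0 < initCount t x) :
    m * ∑ t, ∑ x, w x * (transitionCount t (!t) x / initCount t x) = (m + 1) * ∑ x, w x := by
  rw [mul_sum, sum_congr rfl fun t _ =>
      natCast_mul_sum_mul_transitionCount_div t hm hw fun x hx => hsupp x hx t,
    sum_comm, mul_sum]
  refine sum_congr rfl fun x _ => ?_
  rw [← mul_sum, ← Nat.cast_sum, sum_card_filter_eq_not]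
  push_cast
  ring

end Sums

section Bernoulli

variable {m : ℕ}

theorem wgt_comp_perm {n : ℕ} (p : ℝ) (x : Fin n → Bool) (σ : Equiv.Perm (Fin n)) :
    wgt p (x ∘ σ) = wgt p x :=
  Equiv.prod_comp σ fun i => if x i then p else 1 - p

theorem wgt_pos {n : ℕ} {p : ℝ} (hp : 0 < p) (hp1 : p < 1) (x : Fin n → Bool) : 0 < wgt p x :=
  prod_pos fun i _ => by split <;> linarith

theorem streakSet_one_nonempty_and_iff (x : Fin (m + 1) → Bool) :
    ((streakSet 1 x).Nonempty ∧ (streakSet 1 fun i => !x i).Nonempty) ↔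
      ∀ t, 0 < initCount t x := by
  simp only [← card_pos, card_streakSet_one, initCount_not, Bool.not_true, Bool.forall_bool]
  exact and_comm

theorem phat_one_sub_one_sub_phat_one_not (x : Fin (m + 1) → Bool) (hx : ∀ t, 0 < initCount t x) :
    phat 1 x - (1 - phat 1 fun i => !x i) =
      1 - ∑ t, (transitionCount t (!t) x / initCount t x : ℝ) := by
  have hcount (t : Bool) :
      (transitionCount t t x : ℝ) = initCount t x - transitionCount t (!t) x := by
    rw [← transitionCount_add_transitionCount t x]; push_cast; ring
  have hpos (t : Bool) : (initCount t x : ℝ) ≠ 0 := by have := hx t; positivity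
  rw [phat_one, phat_one, initCount_not, transitionCount_not, Fintype.sum_bool, hcount, hcount]
  simp only [Bool.not_true, Bool.not_false]
  field_simp [hpos true, hpos false]
  ring

noncomputable def eventWgt (p : ℝ) (x : Fin (m + 1) → Bool) : ℝ :=
  if ∀ t, 0 < initCount t x then wgt p x else 0

theorem isInvariantFixingLast_eventWgt (p : ℝ) : IsInvariantFixingLast (eventWgt (m := m) p) :=
  fun σ hσ x => by simp only [eventWgt, initCount_comp_perm _ _ hσ, wgt_comp_perm]

theorem initCount_pos_of_eventWgt_ne_zero {p : ℝ} {x : Fin (m + 1) → Bool}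
    (hx : eventWgt p x ≠ 0) (t : Bool) : 0 < initCount t x := by
  by_contra h
  exact hx (if_neg fun hpos => h (hpos t))

theorem sum_eventWgt_pos (hm : 2 ≤ m) {p : ℝ} (hp : 0 < p) (hp1 : p < 1) :
    0 < ∑ x : Fin (m + 1) → Bool, eventWgt p x := by
  obtain ⟨x₀, hx₀⟩ : ∃ x₀ : Fin (m + 1) → Bool, ∀ t, 0 < initCount t x₀ :=
    ⟨fun i => decide (i = 0), Bool.forall_bool.mpr
      ⟨card_pos.mpr ⟨⟨1, by omega⟩, by simp [Fin.ext_iff]⟩,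
        card_pos.mpr ⟨⟨0, by omega⟩, by simp [Fin.ext_iff]⟩⟩⟩
  refine sum_pos' (fun x _ => ?_) ⟨x₀, mem_univ _, ?_⟩
  · unfold eventWgt; split <;> [exact (wgt_pos hp hp1 x).le; rfl]
  · simp only [eventWgt, if_pos hx₀, wgt_pos hp hp1]

theorem sum_ite_streakSet_one_nonempty_wgt (p : ℝ) :
    (∑ x : Fin (m + 1) → Bool,
        if (streakSet 1 x).Nonempty ∧ (streakSet 1 fun i => !x i).Nonempty then wgt p x else 0) =
      ∑ x : Fin (m + 1) → Bool, eventWgt p x := by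
  simp only [eventWgt, streakSet_one_nonempty_and_iff]

theorem sum_ite_streakSet_one_nonempty_wgt_mul (p : ℝ) :
    (∑ x : Fin (m + 1) → Bool,
        if (streakSet 1 x).Nonempty ∧ (streakSet 1 fun i => !x i).Nonempty then
          wgt p x * (phat 1 x - (1 - phat 1 fun i => !x i)) else 0) =
      ∑ x : Fin (m + 1) → Bool, eventWgt p x -
        ∑ t, ∑ x : Fin (m + 1) → Bool,
          eventWgt p x * (transitionCount t (!t) x / initCount t x) := by
  rw [sum_comm, ← sum_sub_distrib]
  refine sum_congr rfl fun x _ => ?_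
  simp only [eventWgt, streakSet_one_nonempty_and_iff]
  split_ifs with hx
  · rw [phat_one_sub_one_sub_phat_one_not x hx, mul_sub, mul_sum, mul_one]
  · simp

end Bernoulli

/-- The expected difference between the proportion of successes on trials
immediately following a success and the proportion of successes on trials
immediately following a failure, conditional on both being defined, is -1/(n-1). -/
theorem stmt5 (n : ℕ) (hn : 2 < n) (p : ℝ) (hp : 0 < p) (hp1 : p < 1) :
    (∑ x : Fin n → Bool,
        if (streakSet 1 x).Nonempty ∧ (streakSet 1 (fun i => !x i)).Nonempty then
          wgt p x * (phat 1 x - (1 - phat 1 (fun i => !x i))) else 0) /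
    (∑ x : Fin n → Bool,
        if (streakSet 1 x).Nonempty ∧ (streakSet 1 (fun i => !x i)).Nonempty then
          wgt p x else 0)
      = -(1 / ((n : ℝ) - 1)) := by
  obtain ⟨m, rfl⟩ : ∃ m, n = m + 1 := ⟨n - 1, by omega⟩
  have hm : 2 ≤ m := by omega
  have hS := (sum_eventWgt_pos hm hp hp1).ne'
  have hT := natCast_mul_sum_sum_transitionCount_div hm (isInvariantFixingLast_eventWgt p)
    fun _ => initCount_pos_of_eventWgt_ne_zero
  rw [sum_ite_streakSet_one_nonempty_wgt_mul, sum_ite_streakSet_one_nonempty_wgt,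
    Nat.cast_add_one, add_sub_cancel_right]
  generalize ∑ t, ∑ x, eventWgt p x * (transitionCount t (!t) x / initCount t x : ℝ) = T at hT ⊢
  have hm0 : (m : ℝ) ≠ 0 := by positivity
  rw [eq_div_of_mul_eq hm0 ((mul_comm _ _).trans hT)]
  field_simp
  ring
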